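/- Fix σ ∈ (0,2), Δx > 0 and integers I, K ≥ 2, and let W be a grid function satisfying L_σ^D W_i^k = 0 at every interior node and W_i^k = 0 at every node of Γ_h. Then the maximum of W over all grid nodes is attained at some node of Γ_d ∪ Γ_h; consequently max over all nodes (i,k) of W_i^k equals max(0, max over 0 ≤ i ≤ I of W_i^0). -/
import Mathlib


open Finset

/-- Discrete maximum principle (Lemma 4.5): if `W` is discretely
`L_σ^D`-harmonic at every interior node and vanishes on the lateral/top boundary `Γ_h`,
then the maximum of `W` over all grid nodes is attained at a boundary node
(`Γ_d ∪ Γ_h`), and hence equals `max (0, max_{0 ≤ i ≤ I} W i 0)`. -/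
theorem stmt7 (σ : ℝ) (hσ : σ ∈ Set.Ioo (0:ℝ) 2) (Δx : ℝ) (hΔx : 0 < Δx)
    (I K : ℕ) (hI : 2 ≤ I) (hK : 2 ≤ K) (W : ℕ → ℕ → ℝ)
    (hharm : ∀ i k, 0 < i → i < I → 0 < k → k < K →
      ((k : ℝ) * Δx) ^ (1 - σ) *
          (W (i+1) k + W (i-1) k + W i (k+1) + W i (k-1) - 4 * W i k) / Δx ^ 2
        + (1 - σ) * ((k : ℝ) * Δx) ^ (-σ) * (W i (k+1) - W i k) / Δx = 0)
    (hbd : ∀ i k, i ≤ I → k ≤ K → (i = 0 ∨ i = I ∨ k = K) → W i k = 0) :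
    (∃ i k, i ≤ I ∧ k ≤ K ∧ (k = 0 ∨ i = 0 ∨ i = I ∨ k = K) ∧
      ∀ i' k', i' ≤ I → k' ≤ K → W i' k' ≤ W i k)
    ∧ (Finset.range (I+1) ×ˢ Finset.range (K+1)).sup'
        ((Finset.nonempty_range_iff.mpr (Nat.succ_ne_zero I)).product
          (Finset.nonempty_range_iff.mpr (Nat.succ_ne_zero K)))
        (fun p => W p.1 p.2)
      = max 0 ((Finset.range (I+1)).sup'
          (Finset.nonempty_range_iff.mpr (Nat.succ_ne_zero I)) (fun i => W i 0)) := by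
  obtain ⟨hσ0, hσ2⟩ := hσ
  -- Key local lemma: at an interior local max, the value propagates upward.
  have key : ∀ i k, 0 < i → i < I → 0 < k → k < K →
      W (i+1) k ≤ W i k → W (i-1) k ≤ W i k → W i (k+1) ≤ W i k → W i (k-1) ≤ W i k →
      W i (k+1) = W i k := by
    intro i k hi hiI hk hkK h1 h2 h3 h4
    have heq := hharm i k hi hiI hk hkK
    have hkR : (0:ℝ) < (k:ℝ) := by exact_mod_cast hk
    have hy : (0:ℝ) < (k:ℝ) * Δx := mul_pos hkR hΔx
    set y : ℝ := (k:ℝ) * Δx with hydef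
    have hsplit : y ^ (1 - σ) = y * y ^ (-σ) := by
      rw [show (1 - σ) = 1 + (-σ) by ring, Real.rpow_add hy, Real.rpow_one]
    set A : ℝ := y ^ (1-σ) / Δx ^ 2 with hA
    set B : ℝ := y ^ (1-σ) / Δx ^ 2 + (1-σ) * y ^ (-σ) / Δx with hB
    have hApos : 0 < A := div_pos (Real.rpow_pos_of_pos hy _) (by positivity)
    have hBeq : B = y ^ (-σ) / Δx * ((k:ℝ) + 1 - σ) := by
      rw [hB, hsplit, hydef]
      field_simp
      ring
    have hk1 : (1:ℝ) ≤ (k:ℝ) := by exact_mod_cast hk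
    have hBpos : 0 < B := by
      rw [hBeq]
      have : (0:ℝ) < (k:ℝ) + 1 - σ := by linarith
      exact mul_pos (div_pos (Real.rpow_pos_of_pos hy _) hΔx) this
    set a : ℝ := W (i+1) k - W i k with ha
    set b : ℝ := W (i-1) k - W i k with hb
    set c : ℝ := W i (k+1) - W i k with hc
    set d : ℝ := W i (k-1) - W i k with hd
    have heq' : A * (a + b + d) + B * c = 0 := by
      rw [hA, hB, ha, hb, hc, hd]
      linear_combination heq
    have ha0 : a ≤ 0 := by simp [ha]; linarith
    have hb0 : b ≤ 0 := by simp [hb]; linarith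
    have hc0 : c ≤ 0 := by simp [hc]; linarith
    have hd0 : d ≤ 0 := by simp [hd]; linarith
    have hc00 : c = 0 := by
      nlinarith [mul_nonpos_of_nonneg_of_nonpos hApos.le ha0,
        mul_nonpos_of_nonneg_of_nonpos hApos.le hb0,
        mul_nonpos_of_nonneg_of_nonpos hApos.le hd0,
        mul_nonpos_of_nonneg_of_nonpos hBpos.le hc0]
    have := hc00
    rw [hc] at this
    linarith
  -- Propagation: an interior global max propagates to the top boundary, forcing value 0.
  have prop : ∀ n i k, 0 < i → i < I → 0 < k → k + n = K →
      (∀ i' k', i' ≤ I → k' ≤ K → W i' k' ≤ W i k) → W i k = 0 := by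
    intro n
    induction n with
    | zero =>
      intro i k hi hiI hk hkK hmax
      have hkK2 : k = K := by omega
      rw [hkK2]
      exact hbd i K (by omega) le_rfl (Or.inr (Or.inr rfl))
    | succ n ih =>
      intro i k hi hiI hk hkK hmax
      have hkK' : k < K := by omega
      have hstep : W i (k+1) = W i k := by
        apply key i k hi hiI hk hkK'
        · exact hmax (i+1) k (by omega) (by omega)
        · exact hmax (i-1) k (by omega) (by omega)
        · exact hmax i (k+1) (by omega) (by omega)
        · exact hmax i (k-1) (by omega) (by omega)
      have := ih i (k+1) hi hiI (by omega) (by omega)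
        (fun i' k' h1 h2 => by rw [hstep]; exact hmax i' k' h1 h2)
      rw [hstep] at this
      exact this
  -- Global max over the grid
  have hne : ((Finset.range (I+1)) ×ˢ (Finset.range (K+1))).Nonempty :=
    ((Finset.nonempty_range_iff.mpr (Nat.succ_ne_zero I)).product
      (Finset.nonempty_range_iff.mpr (Nat.succ_ne_zero K)))
  obtain ⟨p, hp, hpmax⟩ := Finset.exists_max_image _ (fun p => W p.1 p.2) hne
  obtain ⟨i0, k0⟩ := p
  rw [Finset.mem_product, Finset.mem_range, Finset.mem_range] at hp
  have hi0 : i0 ≤ I := by omega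
  have hk0 : k0 ≤ K := by omega
  have hmax0 : ∀ i' k', i' ≤ I → k' ≤ K → W i' k' ≤ W i0 k0 := by
    intro i' k' h1 h2
    exact hpmax (i', k') (by rw [Finset.mem_product, Finset.mem_range, Finset.mem_range]; omega)
  have part1 : ∃ i k, i ≤ I ∧ k ≤ K ∧ (k = 0 ∨ i = 0 ∨ i = I ∨ k = K) ∧
      ∀ i' k', i' ≤ I → k' ≤ K → W i' k' ≤ W i k := by
    by_cases hcase : k0 = 0 ∨ i0 = 0 ∨ i0 = I ∨ k0 = K
    · exact ⟨i0, k0, hi0, hk0, hcase, hmax0⟩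
    · push_neg at hcase
      obtain ⟨h1, h2, h3, h4⟩ := hcase
      have hzero : W i0 k0 = 0 :=
        prop (K - k0) i0 k0 (by omega) (by omega) (by omega) (by omega) hmax0
      refine ⟨0, 0, by omega, by omega, Or.inl rfl, ?_⟩
      have hW00 : W 0 0 = 0 := hbd 0 0 (by omega) (by omega) (Or.inl rfl)
      intro i' k' hh1 hh2
      rw [hW00, ← hzero]
      exact hmax0 i' k' hh1 hh2
  refine ⟨part1, ?_⟩
  obtain ⟨i1, k1, hi1, hk1, hbd1, hmax1⟩ := part1
  apply le_antisymm
  · apply Finset.sup'_le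
    intro q hq
    rw [Finset.mem_product, Finset.mem_range, Finset.mem_range] at hq
    have hq1 : W q.1 q.2 ≤ W i1 k1 := hmax1 q.1 q.2 (by omega) (by omega)
    rcases hbd1 with h | h
    · subst h
      refine hq1.trans (le_max_of_le_right ?_)
      exact Finset.le_sup' (fun i => W i 0) (Finset.mem_range.mpr (by omega))
    · have : W i1 k1 = 0 := hbd i1 k1 hi1 hk1 h
      rw [this] at hq1
      exact hq1.trans (le_max_left _ _)
  · apply max_le
    · have hW00 : W 0 0 = 0 := hbd 0 0 (by omega) (by omega) (Or.inl rfl)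
      have hmem : ((0:ℕ), (0:ℕ)) ∈ (Finset.range (I+1)) ×ˢ (Finset.range (K+1)) := by
        simp [Finset.mem_product]
      calc (0:ℝ) = W 0 0 := hW00.symm
        _ ≤ _ := Finset.le_sup' (fun p : ℕ × ℕ => W p.1 p.2) hmem
    · apply Finset.sup'_le
      intro i hi
      rw [Finset.mem_range] at hi
      have hmem : (i, (0:ℕ)) ∈ (Finset.range (I+1)) ×ˢ (Finset.range (K+1)) := by
        simp [Finset.mem_product]; omega
      exact Finset.le_sup' (fun p : ℕ × ℕ => W p.1 p.2) hmem
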